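/- Let H be a complex Hilbert space and let F be a von Neumann algebra on H which is a factor, in the sense that every element of F commuting with all elements of F is a complex scalar multiple of the identity. Let V be a unitary operator on H such that the map θ(b) = V b V* sends F onto F (so θ is an automorphism of F). Suppose a ∈ F satisfies a·θ(b) = b·a for all b ∈ F. Then: (i) a*·a = c·I and a·a* = c·I for some nonnegative real scalar c; and (ii) if a ≠ 0, then θ is inner on F: there is a unitary u ∈ F (namely u = c^{-1/2}·a) such that θ(b) = u*·b·u for all b ∈ F. Consequently, if θ is an outer automorphism of the factor F (not implemented by any unitary of F), then a = 0. (This is the key step in the paper's proof that the crossed product ℱ ⋊_θ (𝔖_p×𝔖_q) is a factor and that (ℱ^G)′ ∩ ℱ = ℂ·I: a central element Σ_g Π_θ(a_g)λ_g forces a_g·θ_g(b) = b·a_g for all b ∈ ℱ, hence a_g*a_g ∈ ℱ ∩ ℱ′ = ℂ·I and a_g = 0 for g ≠ e by outerness.) -/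

import Mathlib

/-!
From `a θ(b) = b a` and its adjoint `θ(b) a* = a* b` one gets that `a a*` and `a* a` commute with
every element of `F` (for `a* a` one needs `θ` to map `F` onto `F`), so the factor condition makes
both scalars. In a C*-algebra a scalar `star a * a = c • 1` forces `c = ‖a‖²`, being the norm of a
positive element and a point of its spectrum. Hence `‖a‖⁻¹ • a` is a unitary of `F`, and it
implements `θ`.
-/

section TwistedCommutation

variable {A : Type*} [Monoid A] [StarMul A] {θ : A → A} {S : Set A} {a : A}

theorem map_mul_star_eq_star_mul (hθ : ∀ b, θ (star b) = star (θ b))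
    (hS : ∀ b ∈ S, star b ∈ S) (ha : ∀ b ∈ S, a * θ b = b * a) :
    ∀ b ∈ S, θ b * star a = star a * b := by
  intro b hb
  simpa [hθ] using congrArg star (ha (star b) (hS b hb))

theorem commute_mul_star_self_of_mul_map_eq (hθ : ∀ b, θ (star b) = star (θ b))
    (hS : ∀ b ∈ S, star b ∈ S) (ha : ∀ b ∈ S, a * θ b = b * a) :
    ∀ b ∈ S, Commute (a * star a) b := fun b hb =>
  calc a * star a * b = a * (θ b * star a) := by
        rw [mul_assoc, map_mul_star_eq_star_mul hθ hS ha b hb]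
    _ = b * (a * star a) := by rw [← mul_assoc, ha b hb, mul_assoc]

theorem commute_star_mul_self_of_mul_map_eq (hθ : ∀ b, θ (star b) = star (θ b))
    (hS : ∀ b ∈ S, star b ∈ S) (hsurj : ∀ b ∈ S, ∃ b' ∈ S, θ b' = b)
    (ha : ∀ b ∈ S, a * θ b = b * a) :
    ∀ b ∈ S, Commute (star a * a) b := by
  intro b hb
  obtain ⟨b', hb', rfl⟩ := hsurj b hb
  calc star a * a * θ b' = star a * b' * a := by rw [mul_assoc, ha b' hb', mul_assoc]
    _ = θ b' * (star a * a) := by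
        rw [← map_mul_star_eq_star_mul hθ hS ha b' hb', mul_assoc]

theorem map_eq_star_mul_mul_of_mul_map_eq {u b : A} (hu : star u * u = 1)
    (h : u * θ b = b * u) : θ b = star u * b * u := by
  rw [mul_assoc, ← h, ← mul_assoc, hu, one_mul]

end TwistedCommutation

theorem ofReal_inv_smul_mem_unitary {A : Type*} [Ring A] [StarRing A] [Algebra ℂ A]
    [StarModule ℂ A] {a : A} {r : ℝ} (hr : r ≠ 0)
    (h₁ : star a * a = ((r ^ 2 : ℝ) : ℂ) • 1) (h₂ : a * star a = ((r ^ 2 : ℝ) : ℂ) • 1) :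
    ((r⁻¹ : ℝ) : ℂ) • a ∈ unitary A := by
  have hscalar : ((r⁻¹ : ℝ) : ℂ) * ((r⁻¹ : ℝ) : ℂ) * ((r ^ 2 : ℝ) : ℂ) = 1 := by
    have : (r : ℂ) ≠ 0 := by exact_mod_cast hr
    push_cast
    field_simp
  rw [Unitary.mem_iff, star_smul, Complex.star_def, Complex.conj_ofReal,
    smul_mul_smul_comm, smul_mul_smul_comm, h₁, h₂, smul_smul, hscalar, one_smul]
  exact ⟨rfl, rfl⟩

theorem CStarAlgebra.eq_norm_sq_of_star_mul_self_eq_smul_one {A : Type*} [CStarAlgebra A]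
    [PartialOrder A] [StarOrderedRing A] [Nontrivial A] {a : A} {c : ℂ}
    (h : star a * a = c • 1) : c = ((‖a‖ ^ 2 : ℝ) : ℂ) := by
  have hmem := spectrum.algebraMap_mem ℂ (norm_mem_spectrum_of_nonneg (star_mul_self_nonneg a))
  rw [CStarRing.norm_star_mul_self, ← sq, h, ← Algebra.algebraMap_eq_smul_one,
    spectrum.scalar_eq, Set.mem_singleton_iff] at hmem
  exact hmem.symm

theorem twisted_centralizer_element_of_factor_general
    {H : Type*} [NormedAddCommGroup H] [InnerProductSpace ℂ H] [CompleteSpace H]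
    (F : VonNeumannAlgebra H)
    (hfactor : ∀ x ∈ F, (∀ y ∈ F, x * y = y * x) → ∃ c : ℂ, x = c • (1 : H →L[ℂ] H))
    (V : H →L[ℂ] H) (hV : V ∈ unitary (H →L[ℂ] H))
    (hθ' : ∀ b ∈ F, star V * b * V ∈ F)
    (a : H →L[ℂ] H) (haF : a ∈ F)
    (ha : ∀ b ∈ F, a * (V * b * star V) = b * a) :
    (∃ c : ℝ, 0 ≤ c ∧ star a * a = (c : ℂ) • (1 : H →L[ℂ] H) ∧
        a * star a = (c : ℂ) • (1 : H →L[ℂ] H)) ∧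
    (a ≠ 0 → ∃ u : H →L[ℂ] H, u ∈ F ∧ u ∈ unitary (H →L[ℂ] H) ∧
        ∀ b ∈ F, V * b * star V = star u * b * u) ∧
    ((¬ ∃ u : H →L[ℂ] H, u ∈ F ∧ u ∈ unitary (H →L[ℂ] H) ∧
        ∀ b ∈ F, V * b * star V = star u * b * u) → a = 0) := by
  rcases eq_or_ne a 0 with rfl | ha0
  · exact ⟨⟨0, le_rfl, by simp, by simp⟩, fun h => absurd rfl h, fun _ => rfl⟩
  have : Nontrivial (H →L[ℂ] H) := nontrivial_of_ne a 0 ha0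
  have hθ_star (b : H →L[ℂ] H) : V * star b * star V = star (V * b * star V) := by
    simp [mul_assoc]
  have hVV : V * star V = 1 := Unitary.mul_star_self_of_mem hV
  have hθ_onto : ∀ b ∈ F, ∃ b' ∈ F, V * b' * star V = b := fun b hb =>
    ⟨_, hθ' b hb, by rw [← mul_assoc, ← mul_assoc, hVV, one_mul, mul_assoc, hVV, mul_one]⟩
  obtain ⟨c₁, hc₁⟩ := hfactor _ (mul_mem (star_mem haF) haF)
    (commute_star_mul_self_of_mul_map_eq hθ_star (fun _ => star_mem) hθ_onto ha)
  obtain ⟨c₂, hc₂⟩ := hfactor _ (mul_mem haF (star_mem haF))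
    (commute_mul_star_self_of_mul_map_eq hθ_star (fun _ => star_mem) ha)
  have hstar_mul : star a * a = ((‖a‖ ^ 2 : ℝ) : ℂ) • 1 := by
    rw [hc₁, CStarAlgebra.eq_norm_sq_of_star_mul_self_eq_smul_one hc₁]
  have hmul_star : a * star a = ((‖a‖ ^ 2 : ℝ) : ℂ) • 1 := by
    have hc₂' : star (star a) * star a = c₂ • 1 := by rwa [star_star]
    rw [hc₂, CStarAlgebra.eq_norm_sq_of_star_mul_self_eq_smul_one hc₂', norm_star]
  set u := ((‖a‖⁻¹ : ℝ) : ℂ) • a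
  have hu : u ∈ unitary (H →L[ℂ] H) :=
    ofReal_inv_smul_mem_unitary (norm_ne_zero_iff.mpr ha0) hstar_mul hmul_star
  have hθ_inner : ∃ u : H →L[ℂ] H, u ∈ F ∧ u ∈ unitary (H →L[ℂ] H) ∧
      ∀ b ∈ F, V * b * star V = star u * b * u :=
    ⟨u, F.smul_mem haF _, hu, fun b hb => map_eq_star_mul_mul_of_mul_map_eq
      (θ := fun b => V * b * star V) (Unitary.star_mul_self_of_mem hu)
      (by simp only [u, smul_mul_assoc, mul_smul_comm, ha b hb])⟩
  exact ⟨⟨_, by positivity, hstar_mul, hmul_star⟩, fun _ => hθ_inner, fun h => absurd hθ_inner h⟩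

/-- Let `F` be a von Neumann algebra on a complex Hilbert space `H` which is a factor, let
`V` be a unitary on `H` such that `θ b = V b V*` maps `F` onto `F`, and let `a ∈ F` satisfy
`a * θ b = b * a` for all `b ∈ F`.  Then `a* a` and `a a*` are a common nonnegative scalar
multiple of the identity; if `a ≠ 0` then `θ` is inner on `F`; and consequently if `θ` is
outer then `a = 0`. -/
theorem twisted_centralizer_element_of_factor
    {H : Type*} [NormedAddCommGroup H] [InnerProductSpace ℂ H] [CompleteSpace H]
    (F : VonNeumannAlgebra H)
    (hfactor : ∀ x ∈ F, (∀ y ∈ F, x * y = y * x) → ∃ c : ℂ, x = c • (1 : H →L[ℂ] H))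
    (V : H →L[ℂ] H) (hV : V ∈ unitary (H →L[ℂ] H))
    (hθ : ∀ b ∈ F, V * b * star V ∈ F)
    (hθ' : ∀ b ∈ F, star V * b * V ∈ F)
    (a : H →L[ℂ] H) (haF : a ∈ F)
    (ha : ∀ b ∈ F, a * (V * b * star V) = b * a) :
    (∃ c : ℝ, 0 ≤ c ∧ star a * a = (c : ℂ) • (1 : H →L[ℂ] H) ∧
        a * star a = (c : ℂ) • (1 : H →L[ℂ] H)) ∧
    (a ≠ 0 → ∃ u : H →L[ℂ] H, u ∈ F ∧ u ∈ unitary (H →L[ℂ] H) ∧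
        ∀ b ∈ F, V * b * star V = star u * b * u) ∧
    ((¬ ∃ u : H →L[ℂ] H, u ∈ F ∧ u ∈ unitary (H →L[ℂ] H) ∧
        ∀ b ∈ F, V * b * star V = star u * b * u) → a = 0) :=
  twisted_centralizer_element_of_factor_general F hfactor V hV hθ' a haF ha
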